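/- Let (u_ε) solve the regularized problems ∂_t²u_ε − Σ_j ∂_{x_j}(h_{j,ε}∂_{x_j}u_ε) = 0 with h_{j,ε} ∈ W^{1,∞}(ℝ^d), h_{j,ε} ≥ c₀ > 0, data u_{0,ε} ∈ H², u_{1,ε} ∈ H¹ satisfying ‖h_{j,ε}‖_{W^{1,∞}} ≲ ε^{-N₀}, ‖u_{0,ε}‖_{H²} ≲ ε^{-N₁}, ‖u_{1,ε}‖_{H¹} ≲ ε^{-N₂}, and assume all h_{j,ε} are equal to a common h_ε. Then for all t ∈ [0,T], ‖u_ε(t,·)‖_{H²} ≲ ε^{-2N₀ − max(N₁,N₂)}, i.e. (u_ε) is C¹-moderate and hence a very weak solution exists. -/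

import Mathlib

open MeasureTheory

/-- The `j`-th partial derivative `∂_{x_j} f`. -/
noncomputable def pd (d : ℕ) (j : Fin d) (f : (Fin d → ℝ) → ℝ) (x : Fin d → ℝ) : ℝ :=
  fderiv ℝ f x (Pi.single j 1)

/-- The Laplacian `Δf = Σ_j ∂²_{x_j} f`. -/
noncomputable def lap (d : ℕ) (f : (Fin d → ℝ) → ℝ) (x : Fin d → ℝ) : ℝ :=
  ∑ j, pd d j (pd d j f) x

/-- `L²` norm. -/
noncomputable def L2 (d : ℕ) (f : (Fin d → ℝ) → ℝ) : ENNReal :=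
  eLpNorm f 2 (volume : Measure (Fin d → ℝ))

/-- `L^∞` norm. -/
noncomputable def Linf (d : ℕ) (f : (Fin d → ℝ) → ℝ) : ENNReal :=
  eLpNorm f ⊤ (volume : Measure (Fin d → ℝ))

/-- The `H¹` norm `‖f‖_{L²} + Σ_j ‖∂_j f‖_{L²}`. -/
noncomputable def H1n (d : ℕ) (f : (Fin d → ℝ) → ℝ) : ENNReal :=
  L2 d f + ∑ j, L2 d (pd d j f)

/-- The `H²` norm `‖f‖_{L²} + Σ_j ‖∂_j f‖_{L²} + ‖Δf‖_{L²}` used in the paper. -/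
noncomputable def H2n (d : ℕ) (f : (Fin d → ℝ) → ℝ) : ENNReal :=
  L2 d f + ∑ j, L2 d (pd d j f) + L2 d (lap d f)

/-- The `W^{1,∞}` norm `‖f‖_{L^∞} + ‖∇f‖_{L^∞}`. -/
noncomputable def W1i (d : ℕ) (f : (Fin d → ℝ) → ℝ) : ENNReal :=
  Linf d f + Linf d (fun x => ‖fderiv ℝ f x‖)

/-! Theorem 2.1 bounds `‖u_ε(t)‖_{H²}` by `‖h_ε‖_{W^{1,∞}}`, its square root and the data norms,
combined by sums and products. Nets bounded by `C ε^{-N}` are closed under sums, products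
(orders add) and powers `x ^ p`, `p ∈ [0, 1]` (as `x ^ p ≤ 1 + x`), so the lower-order energy has
order `N₀ + max N₁ N₂` and `‖Δu_ε(t)‖_{L²}` order `2 N₀ + max N₁ N₂`. -/

open scoped ENNReal

theorem ENNReal.rpow_le_one_add {x : ℝ≥0∞} {p : ℝ} (hp₀ : 0 ≤ p) (hp₁ : p ≤ 1) :
    x ^ p ≤ 1 + x := by
  rcases le_total x 1 with hx | hx
  · exact (ENNReal.rpow_le_one hx hp₀).trans le_self_add
  · calc x ^ p ≤ x ^ (1:ℝ) := ENNReal.rpow_le_rpow_of_exponent_le hx hp₁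
      _ = x := ENNReal.rpow_one x
      _ ≤ 1 + x := le_add_self

def IsModerate (N : ℕ) (f : ℝ → ℝ≥0∞) : Prop :=
  ∃ C : ℝ, 0 < C ∧ ∀ ε ∈ Set.Ioc (0:ℝ) 1, f ε ≤ ENNReal.ofReal (C / ε ^ N)

namespace IsModerate

variable {N M : ℕ} {f g : ℝ → ℝ≥0∞}

theorem const {c : ℝ≥0∞} (hc : c ≠ ⊤) : IsModerate 0 fun _ => c := by
  refine ⟨c.toReal + 1, by positivity, fun _ _ => ?_⟩
  rw [pow_zero, div_one, ENNReal.le_ofReal_iff_toReal_le hc (by positivity)]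
  exact le_add_of_nonneg_right zero_le_one

theorem mono (hg : IsModerate N g) (hfg : ∀ ε ∈ Set.Ioc (0:ℝ) 1, f ε ≤ g ε) :
    IsModerate N f :=
  let ⟨C, hC, hgC⟩ := hg
  ⟨C, hC, fun ε hε => (hfg ε hε).trans (hgC ε hε)⟩

theorem mono_order (hf : IsModerate N f) (hNM : N ≤ M) : IsModerate M f := by
  obtain ⟨C, hC, hfC⟩ := hf
  refine ⟨C, hC, fun ε hε => (hfC ε hε).trans (ENNReal.ofReal_le_ofReal ?_)⟩
  exact div_le_div_of_nonneg_left hC.le (pow_pos hε.1 M) (pow_le_pow_of_le_one hε.1.le hε.2 hNM)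

theorem add (hf : IsModerate N f) (hg : IsModerate N g) :
    IsModerate N fun ε => f ε + g ε := by
  obtain ⟨C, hC, hfC⟩ := hf
  obtain ⟨D, hD, hgD⟩ := hg
  refine ⟨C + D, add_pos hC hD, fun ε hε => ?_⟩
  have hεN : 0 < ε ^ N := pow_pos hε.1 N
  calc f ε + g ε ≤ ENNReal.ofReal (C / ε ^ N) + ENNReal.ofReal (D / ε ^ N) :=
        add_le_add (hfC ε hε) (hgD ε hε)
    _ = ENNReal.ofReal ((C + D) / ε ^ N) := by
        rw [add_div, ENNReal.ofReal_add (by positivity) (by positivity)]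

theorem mul (hf : IsModerate N f) (hg : IsModerate M g) :
    IsModerate (N + M) fun ε => f ε * g ε := by
  obtain ⟨C, hC, hfC⟩ := hf
  obtain ⟨D, hD, hgD⟩ := hg
  refine ⟨C * D, mul_pos hC hD, fun ε hε => ?_⟩
  calc f ε * g ε ≤ ENNReal.ofReal (C / ε ^ N) * ENNReal.ofReal (D / ε ^ M) :=
        mul_le_mul' (hfC ε hε) (hgD ε hε)
    _ = ENNReal.ofReal (C * D / ε ^ (N + M)) := by
        rw [← ENNReal.ofReal_mul (div_nonneg hC.le (pow_pos hε.1 N).le), div_mul_div_comm,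
          pow_add]

theorem const_mul (hf : IsModerate N f) {c : ℝ≥0∞} (hc : c ≠ ⊤) :
    IsModerate N fun ε => c * f ε := by
  simpa only [zero_add] using (const hc).mul hf

theorem one_add (hf : IsModerate N f) : IsModerate N fun ε => 1 + f ε :=
  ((const ENNReal.one_ne_top).mono_order N.zero_le).add hf

theorem sup (hf : IsModerate N f) (hg : IsModerate N g) :
    IsModerate N fun ε => max (f ε) (g ε) :=
  (hf.add hg).mono fun _ _ => max_le le_self_add le_add_self

theorem rpow (hf : IsModerate N f) {p : ℝ} (hp₀ : 0 ≤ p) (hp₁ : p ≤ 1) :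
    IsModerate N fun ε => f ε ^ p :=
  hf.one_add.mono fun _ _ => ENNReal.rpow_le_one_add hp₀ hp₁

end IsModerate

section SobolevNorms

variable (d : ℕ) (f : (Fin d → ℝ) → ℝ)

theorem Linf_le_W1i : Linf d f ≤ W1i d f := le_self_add

theorem L2_le_H1n : L2 d f ≤ H1n d f := le_self_add

theorem H1n_le_H2n : H1n d f ≤ H2n d f := le_self_add

theorem H2n_le_energy_add_L2_lap (g : (Fin d → ℝ) → ℝ) :
    H2n d f ≤ L2 d f + L2 d g + ∑ j, L2 d (pd d j f) + L2 d (lap d f) :=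
  add_le_add_left (add_le_add_left le_self_add _) _

end SobolevNorms

theorem very_weak_solution_moderate_general (d : ℕ) (T : ℝ)
    (N₀ N₁ N₂ : ℕ)
    (h : ℝ → (Fin d → ℝ) → ℝ)                    -- common coefficient net h_ε
    (u0e u1e : ℝ → (Fin d → ℝ) → ℝ)              -- data nets
    (u : ℝ → ℝ → (Fin d → ℝ) → ℝ)                -- solution net u_ε
    -- moderateness of coefficients and data
    (hmodh : ∃ C : ℝ, 0 < C ∧ ∀ ε ∈ Set.Ioc (0:ℝ) 1,
      W1i d (h ε) ≤ ENNReal.ofReal (C / ε ^ N₀))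
    (hmod0 : ∃ C : ℝ, 0 < C ∧ ∀ ε ∈ Set.Ioc (0:ℝ) 1,
      H2n d (u0e ε) ≤ ENNReal.ofReal (C / ε ^ N₁))
    (hmod1 : ∃ C : ℝ, 0 < C ∧ ∀ ε ∈ Set.Ioc (0:ℝ) 1,
      H1n d (u1e ε) ≤ ENNReal.ofReal (C / ε ^ N₂))
    -- the energy estimates of Theorem 2.1, applied to the regularised problems
    (hEst1 : ∃ C : ℝ, 0 < C ∧ ∀ ε ∈ Set.Ioc (0:ℝ) 1, ∀ t ∈ Set.Icc (0:ℝ) T,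
      L2 d (u ε t) + L2 d (fun x => deriv (fun s => u ε s x) t)
          + ∑ j, L2 d (pd d j (u ε t))
        ≤ ENNReal.ofReal C * (1 + (d : ENNReal) * (Linf d (h ε)) ^ ((1:ℝ)/2))
            * (H1n d (u0e ε) + L2 d (u1e ε)))
    (hEst2 : ∃ C : ℝ, 0 < C ∧ ∀ ε ∈ Set.Ioc (0:ℝ) 1, ∀ t ∈ Set.Icc (0:ℝ) T,
      L2 d (lap d (u ε t))
        ≤ ENNReal.ofReal C
            * max ((W1i d (h ε)) ^ ((1:ℝ)/2)) (W1i d (h ε))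
            * (1 + max ((W1i d (h ε)) ^ ((1:ℝ)/2)) (W1i d (h ε)))
            * (H2n d (u0e ε) + H1n d (u1e ε))) :
    ∃ C : ℝ, 0 < C ∧ ∀ ε ∈ Set.Ioc (0:ℝ) 1, ∀ t ∈ Set.Icc (0:ℝ) T,
      H2n d (u ε t) ≤ ENNReal.ofReal (C / ε ^ (2 * N₀ + max N₁ N₂)) := by
  obtain ⟨C₁, -, hEst1⟩ := hEst1
  obtain ⟨C₂, -, hEst2⟩ := hEst2
  have hW : IsModerate N₀ fun ε => W1i d (h ε) := hmodh
  have hmaxW : IsModerate N₀ fun ε => max (W1i d (h ε) ^ ((1:ℝ)/2)) (W1i d (h ε)) :=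
    (hW.rpow (by norm_num) (by norm_num)).sup hW
  have hdata : IsModerate (max N₁ N₂) fun ε => H2n d (u0e ε) + H1n d (u1e ε) :=
    (IsModerate.mono_order hmod0 (le_max_left _ _)).add
      (IsModerate.mono_order hmod1 (le_max_right _ _))
  have hsqrtLinf : IsModerate N₀ fun ε => Linf d (h ε) ^ ((1:ℝ)/2) :=
    (hW.mono fun ε _ => Linf_le_W1i d (h ε)).rpow (by norm_num) (by norm_num)
  have hlow : IsModerate (N₀ + max N₁ N₂) fun ε => ENNReal.ofReal C₁
      * (1 + (d : ℝ≥0∞) * Linf d (h ε) ^ ((1:ℝ)/2)) * (H1n d (u0e ε) + L2 d (u1e ε)) :=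
    ((hsqrtLinf.const_mul (ENNReal.natCast_ne_top d)).one_add.const_mul ENNReal.ofReal_ne_top).mul
      (hdata.mono fun ε _ => add_le_add (H1n_le_H2n d _) (L2_le_H1n d _))
  have hhigh : IsModerate (N₀ + N₀ + max N₁ N₂) fun ε => ENNReal.ofReal C₂
      * max (W1i d (h ε) ^ ((1:ℝ)/2)) (W1i d (h ε))
      * (1 + max (W1i d (h ε) ^ ((1:ℝ)/2)) (W1i d (h ε))) * (H2n d (u0e ε) + H1n d (u1e ε)) :=
    ((hmaxW.const_mul ENNReal.ofReal_ne_top).mul hmaxW.one_add).mul hdata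
  obtain ⟨C, hC, hbound⟩ :=
    (hlow.mono_order (M := 2 * N₀ + max N₁ N₂) (by omega)).add (hhigh.mono_order (by omega))
  refine ⟨C, hC, fun ε hε t ht => le_trans ?_ (hbound ε hε)⟩
  exact (H2n_le_energy_add_L2_lap d _ _).trans (add_le_add (hEst1 ε hε t ht) (hEst2 ε hε t ht))

/-- moderateness (`C¹`-moderateness, hence existence of a very weak solution) of
the net of solutions of the regularised problems: if the coefficient, data and solution nets
satisfy the regularised equation and the moderateness bounds
`‖h_ε‖_{W^{1,∞}} ≲ ε^{-N₀}`, `‖u_{0,ε}‖_{H²} ≲ ε^{-N₁}`, `‖u_{1,ε}‖_{H¹} ≲ ε^{-N₂}`, and the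
energy estimates of Theorem 2.1 hold for the regularised problems, then
`‖u_ε(t,·)‖_{H²} ≲ ε^{-2N₀ − max(N₁,N₂)}` for all `t ∈ [0,T]`. -/
theorem very_weak_solution_moderate (d : ℕ) (T : ℝ) (hT : 0 < T)
    (N₀ N₁ N₂ : ℕ) (c₀ : ℝ) (hc₀ : 0 < c₀)
    (h : ℝ → (Fin d → ℝ) → ℝ)                    -- common coefficient net h_ε
    (u0e u1e : ℝ → (Fin d → ℝ) → ℝ)              -- data nets
    (u : ℝ → ℝ → (Fin d → ℝ) → ℝ)                -- solution net u_ε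
    -- regularity and positivity of the coefficient net
    (hhsm : ∀ ε ∈ Set.Ioc (0:ℝ) 1, ContDiff ℝ ⊤ (h ε))
    (hpos : ∀ ε ∈ Set.Ioc (0:ℝ) 1, ∀ x, c₀ ≤ h ε x)
    -- regularity of the solution net
    (hureg : ∀ ε ∈ Set.Ioc (0:ℝ) 1,
      ContDiff ℝ 2 (fun p : ℝ × (Fin d → ℝ) => u ε p.1 p.2))
    -- the regularised equation and data
    (hPDE : ∀ ε ∈ Set.Ioc (0:ℝ) 1, ∀ t ∈ Set.Icc (0:ℝ) T, ∀ x,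
      deriv (fun s => deriv (fun τ => u ε τ x) s) t
        = ∑ j, pd d j (fun y => h ε y * pd d j (u ε t) y) x)
    (hinit0 : ∀ ε ∈ Set.Ioc (0:ℝ) 1, ∀ x, u ε 0 x = u0e ε x)
    (hinit1 : ∀ ε ∈ Set.Ioc (0:ℝ) 1, ∀ x, deriv (fun s => u ε s x) 0 = u1e ε x)
    -- moderateness of coefficients and data
    (hmodh : ∃ C : ℝ, 0 < C ∧ ∀ ε ∈ Set.Ioc (0:ℝ) 1,
      W1i d (h ε) ≤ ENNReal.ofReal (C / ε ^ N₀))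
    (hmod0 : ∃ C : ℝ, 0 < C ∧ ∀ ε ∈ Set.Ioc (0:ℝ) 1,
      H2n d (u0e ε) ≤ ENNReal.ofReal (C / ε ^ N₁))
    (hmod1 : ∃ C : ℝ, 0 < C ∧ ∀ ε ∈ Set.Ioc (0:ℝ) 1,
      H1n d (u1e ε) ≤ ENNReal.ofReal (C / ε ^ N₂))
    -- the energy estimates of Theorem 2.1, applied to the regularised problems
    (hEst1 : ∃ C : ℝ, 0 < C ∧ ∀ ε ∈ Set.Ioc (0:ℝ) 1, ∀ t ∈ Set.Icc (0:ℝ) T,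
      L2 d (u ε t) + L2 d (fun x => deriv (fun s => u ε s x) t)
          + ∑ j, L2 d (pd d j (u ε t))
        ≤ ENNReal.ofReal C * (1 + (d : ENNReal) * (Linf d (h ε)) ^ ((1:ℝ)/2))
            * (H1n d (u0e ε) + L2 d (u1e ε)))
    (hEst2 : ∃ C : ℝ, 0 < C ∧ ∀ ε ∈ Set.Ioc (0:ℝ) 1, ∀ t ∈ Set.Icc (0:ℝ) T,
      L2 d (lap d (u ε t))
        ≤ ENNReal.ofReal C
            * max ((W1i d (h ε)) ^ ((1:ℝ)/2)) (W1i d (h ε))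
            * (1 + max ((W1i d (h ε)) ^ ((1:ℝ)/2)) (W1i d (h ε)))
            * (H2n d (u0e ε) + H1n d (u1e ε))) :
    ∃ C : ℝ, 0 < C ∧ ∀ ε ∈ Set.Ioc (0:ℝ) 1, ∀ t ∈ Set.Icc (0:ℝ) T,
      H2n d (u ε t) ≤ ENNReal.ofReal (C / ε ^ (2 * N₀ + max N₁ N₂)) :=
  very_weak_solution_moderate_general d T N₀ N₁ N₂ h u0e u1e u hmodh hmod0 hmod1 hEst1 hEst2
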